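/- Let φ : ℝ → ℝ be self-equivarying with index ρ > 0, let h : ℝ → ℝ be a Baire function, and suppose the set S of t on which both H*(t) := limsup_{x→∞} (h(x + tφ(x)) − h(x)) and H_*(t) := liminf_{x→∞} (h(x + tφ(x)) − h(x)) are finite contains a half-line [a₀, ∞) with a₀ > 0. Then there exist constants C > 0, X and U > 1 such that h(x + uφ(x)) − h(x) ≤ C·log u for all x ≥ X and all u ≥ U. -/

import Mathlib

/-!
Write `Δₜ h(x) = h(x + t φ(x)) - h(x)` (`shiftDiff φ h t x`). For `x' = x + t φ(x)` and
`r = φ(x')/φ(x)` one has the cocycle identity `Δ_{r w + t} h(x) = Δₜ h(x) + Δ_w h(x')`.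

First, `Δₜ h(x)` is bounded above uniformly in `t ∈ [0, b]` for large `x`. Otherwise there are
`xₙ → ∞`, `tₙ → t₀` with `Δ_{tₙ} h(xₙ) → ∞`, and `rₙ → r₀ = 1 + ρ t₀`. The families
`s ↦ Δₛ h(xₙ)` and `w ↦ -Δ_w h(x'ₙ)` are pointwise eventually bounded on `(a₀, ∞)`, so by the
Baire category theorem some of their uniform level sets are comeagre on open sets `V` and `U` with
`V ⊆ r₀ U + t₀`. For large `n` the open set `U ∩ (V - tₙ)/rₙ` is nonempty, hence contains a `w`
lying in both level sets, and the cocycle identity bounds `Δ_{tₙ} h(xₙ)`.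

Second, `φ(x + a₀ φ(x)) ≥ q φ(x)` with `q > 1` for large `x`, so peeling off steps of length `a₀`
with the cocycle identity covers `u ≤ B qⁿ` in `n + 1` steps, each costing at most the uniform
bound on `[a₀, B]`: the increment grows at most like `log u`.
-/

open Filter Topology

/-- A function `φ : ℝ → ℝ` is *self-equivarying* with index `ρ`:
`φ` is eventually positive, `φ(x) = O(x)` at infinity, and
`φ(x + t φ(x))/φ(x) → 1 + ρ t` locally uniformly in `t ∈ [0,∞)`. -/
def IsSelfEquivarying (φ : ℝ → ℝ) (ρ : ℝ) : Prop :=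
  (∀ᶠ x in atTop, 0 < φ x) ∧
  (φ =O[atTop] fun x => x) ∧
  ∀ T > 0, TendstoUniformlyOn (fun x t => φ (x + t * φ x) / φ x)
    (fun t => 1 + ρ * t) atTop (Set.Icc 0 T)

/-- A function is Baire if preimages of open sets have the Baire property. -/
def BaireFun (h : ℝ → ℝ) : Prop :=
  ∀ U : Set ℝ, IsOpen U → BaireMeasurableSet (h ⁻¹' U)

open Set Real

section Baire

variable {X : Type*} [TopologicalSpace X] [BaireSpace X]

theorem exists_isOpen_isMeagre_diff_of_subset_iUnion {A : ℕ → Set X}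
    (hA : ∀ k, BaireMeasurableSet (A k)) {S : Set X} (hS : IsOpen S) (hSne : S.Nonempty)
    (hcov : S ⊆ ⋃ k, A k) :
    ∃ k, ∃ U ⊆ S, IsOpen U ∧ U.Nonempty ∧ IsMeagre (U \ A k) := by
  obtain ⟨k, hk⟩ : ∃ k, ¬IsMeagre (A k ∩ S) := by
    by_contra! h
    refine not_isMeagre_of_isOpen hS hSne ((isMeagre_iUnion h).mono fun x hx => ?_)
    obtain ⟨k, hxk⟩ := mem_iUnion.1 (hcov hx)
    exact mem_iUnion.2 ⟨k, hxk, hx⟩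
  obtain ⟨U, hUo, hU⟩ := ((hA k).inter hS.baireMeasurableSet).residualEq_isOpen
  have hsymm : IsMeagre {x | ¬(x ∈ A k ∩ S ↔ x ∈ U)} :=
    Filter.mem_of_superset (eventuallyEq_set.1 hU) fun _ hx hnx => hnx hx
  have hUS : IsMeagre ((U ∩ S) \ A k) :=
    hsymm.mono fun x ⟨⟨hxU, hxS⟩, hxA⟩ => by simp_all
  refine ⟨k, U ∩ S, inter_subset_right, hUo.inter hS, ?_, hUS⟩
  by_contra hempty
  refine hk (hsymm.mono fun x hx => ?_)
  exact fun hiff => hempty ⟨x, hiff.1 hx, hx.2⟩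

theorem exists_mem_map_mem_of_isMeagre_diff {Y : Type*} [TopologicalSpace Y] {f : X → Y}
    (hf : Continuous f) (hfo : IsOpenMap f) {U A : Set X} {V B : Set Y} (hU : IsOpen U)
    (hV : IsOpen V) (hUA : IsMeagre (U \ A)) (hVB : IsMeagre (V \ B))
    (hne : (U ∩ f ⁻¹' V).Nonempty) : ∃ x ∈ A, f x ∈ B := by
  by_contra! h
  refine not_isMeagre_of_isOpen (hU.inter (hV.preimage hf)) hne
    ((hUA.union (hVB.preimage_of_isOpenMap hf hfo)).mono fun x ⟨hxU, hxV⟩ => ?_)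
  by_cases hxA : x ∈ A
  · exact Or.inr ⟨hxV, h x hxA⟩
  · exact Or.inl ⟨hxU, hxA⟩

end Baire

theorem isBoundedUnder_le_of_limsup_coe_lt_top {α : Type*} {l : Filter α} {f : α → ℝ}
    (hf : limsup (fun x => (f x : EReal)) l < ⊤) : IsBoundedUnder (· ≤ ·) l f := by
  obtain ⟨r, hr, -⟩ := EReal.lt_iff_exists_real_btwn.1 hf
  exact ⟨r, (eventually_lt_of_limsup_lt hr).mono fun _ hx => (EReal.coe_lt_coe_iff.1 hx).le⟩

theorem isBoundedUnder_ge_of_bot_lt_liminf_coe {α : Type*} {l : Filter α} {f : α → ℝ}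
    (hf : ⊥ < liminf (fun x => (f x : EReal)) l) : IsBoundedUnder (· ≥ ·) l f := by
  obtain ⟨r, -, hr⟩ := EReal.lt_iff_exists_real_btwn.1 hf
  exact ⟨r, (eventually_lt_of_lt_liminf hr).mono fun _ hx => (EReal.coe_lt_coe_iff.1 hx).le⟩

theorem TendstoUniformlyOn.tendsto_comp_of_tendsto {ι κ α β : Type*} [TopologicalSpace α]
    [UniformSpace β] {F : ι → α → β} {f : α → β} {p : Filter ι} {s : Set α} {a : α}
    (h : TendstoUniformlyOn F f p s) (hf : ContinuousWithinAt f s a) {l : Filter κ}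
    {x : κ → ι} {t : κ → α} (hx : Tendsto x l p) (ht : Tendsto t l (𝓝[s] a)) :
    Tendsto (fun n => F (x n) (t n)) l (𝓝 (f a)) :=
  TendstoUniformlyOn.tendsto_comp (F := fun n => F (x n)) (fun u hu => hx.eventually (h u hu))
    hf ht

theorem eventually_mul_le_and_le_mul_of_tendsto_div {α : Type*} {l : Filter α} {f g : α → ℝ}
    {c q Q : ℝ} (hg : ∀ᶠ x in l, 0 < g x) (hfg : Tendsto (fun x => f x / g x) l (𝓝 c))
    (hq : q < c) (hQ : c < Q) : ∀ᶠ x in l, q * g x ≤ f x ∧ f x ≤ Q * g x := by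
  filter_upwards [hg, hfg (Ioo_mem_nhds hq hQ)] with x hgx ⟨hlo, hhi⟩
  exact ⟨((lt_div_iff₀ hgx).1 hlo).le, ((div_lt_iff₀ hgx).1 hhi).le⟩

theorem subset_iUnion_setOf_forall_ge_le {α : Type*} {g : ℕ → α → ℝ} {S : Set α}
    (hg : ∀ s ∈ S, IsBoundedUnder (· ≤ ·) atTop fun n => g n s) :
    S ⊆ ⋃ k : ℕ, {s | ∀ n ≥ k, g n s ≤ k} := by
  intro s hs
  obtain ⟨m, hm⟩ := (hg s hs).eventually_le
  obtain ⟨N, hN⟩ := eventually_atTop.1 hm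
  refine mem_iUnion.2 ⟨max N ⌈m⌉₊, fun n hn => ?_⟩
  calc g n s ≤ m := hN n (le_of_max_le_left hn)
    _ ≤ ⌈m⌉₊ := Nat.le_ceil m
    _ ≤ (max N ⌈m⌉₊ : ℕ) := by exact_mod_cast le_max_right N ⌈m⌉₊

theorem Continuous.comp_baireFun {f g : ℝ → ℝ} (hf : Continuous f) (hg : BaireFun g) :
    BaireFun fun x => f (g x) :=
  fun _ hU => hg _ (hU.preimage hf)

theorem BaireFun.comp_add_mul {g : ℝ → ℝ} (hg : BaireFun g) (p q : ℝ) :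
    BaireFun fun s => g (p + s * q) := by
  intro U hU
  rcases eq_or_ne q 0 with rfl | hq
  · by_cases hp : g p ∈ U <;> simp [hp, MeasurableSet.univ.baireMeasurableSet,
      MeasurableSet.empty.baireMeasurableSet]
  · convert (hg U hU).preimage (affineHomeomorph q p hq).continuous
      (affineHomeomorph q p hq).isOpenMap using 1
    ext s
    simp [affineHomeomorph, add_comm, mul_comm]

theorem BaireFun.baireMeasurableSet_le {g : ℝ → ℝ} (hg : BaireFun g) (c : ℝ) :
    BaireMeasurableSet {s | g s ≤ c} := by
  simpa [compl_def] using (hg _ isOpen_Ioi).compl (s := g ⁻¹' Ioi c)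

theorem baireMeasurableSet_setOf_forall_ge_le {g : ℕ → ℝ → ℝ} (hg : ∀ n, BaireFun (g n))
    (k : ℕ) : BaireMeasurableSet {s | ∀ n ≥ k, g n s ≤ k} := by
  simp only [ofPred_forall]
  exact .iInter fun n => .iInter fun _ => (hg n).baireMeasurableSet_le k

theorem exists_eventually_exists_le_comp_affine {g g' : ℕ → ℝ → ℝ}
    (hg : ∀ n, BaireFun (g n)) (hg' : ∀ n, BaireFun (g' n)) {S : Set ℝ} (hS : IsOpen S)
    (hSne : S.Nonempty) (hbdd : ∀ s ∈ S, IsBoundedUnder (· ≤ ·) atTop fun n => g n s)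
    (hbdd' : ∀ s ∈ S, IsBoundedUnder (· ≤ ·) atTop fun n => g' n s) {r t : ℕ → ℝ} {r₀ t₀ : ℝ}
    (hr : Tendsto r atTop (𝓝 r₀)) (ht : Tendsto t atTop (𝓝 t₀)) (hr₀ : r₀ ≠ 0)
    (hmaps : MapsTo (fun w => r₀ * w + t₀) S S) :
    ∃ K : ℝ, ∀ᶠ n in atTop, ∃ w, g' n w ≤ K ∧ g n (r n * w + t n) ≤ K := by
  obtain ⟨k, U, hUS, hUo, hUne, hU⟩ := exists_isOpen_isMeagre_diff_of_subset_iUnion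
    (baireMeasurableSet_setOf_forall_ge_le hg') hS hSne (subset_iUnion_setOf_forall_ge_le hbdd')
  let ψ := affineHomeomorph r₀ t₀ hr₀
  have hψU : ψ '' U ⊆ S := by
    rintro _ ⟨w, hw, rfl⟩
    exact hmaps (hUS hw)
  obtain ⟨k', V, hVU, hVo, ⟨v, hv⟩, hV⟩ := exists_isOpen_isMeagre_diff_of_subset_iUnion
    (baireMeasurableSet_setOf_forall_ge_le hg) (ψ.isOpenMap U hUo) (hUne.image ψ)
    (hψU.trans (subset_iUnion_setOf_forall_ge_le hbdd))
  obtain ⟨w₀, hw₀, rfl⟩ := hVU hv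
  have hconv : Tendsto (fun n => r n * w₀ + t n) atTop (𝓝 (ψ w₀)) := (hr.mul_const w₀).add ht
  refine ⟨max k k', ?_⟩
  filter_upwards [hconv (hVo.mem_nhds hv), hr.eventually_ne hr₀, eventually_ge_atTop (max k k')]
    with n hnV hrn hn
  obtain ⟨w, hwU, hwV⟩ := exists_mem_map_mem_of_isMeagre_diff
    (affineHomeomorph (r n) (t n) hrn).continuous (affineHomeomorph (r n) (t n) hrn).isOpenMap
    hUo hVo hU hV ⟨w₀, hw₀, hnV⟩
  refine ⟨w, (hwU n (le_of_max_le_left hn)).trans ?_, (hwV n (le_of_max_le_right hn)).trans ?_⟩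
  · exact_mod_cast le_max_left k k'
  · exact_mod_cast le_max_right k k'

def shiftDiff (φ h : ℝ → ℝ) (t x : ℝ) : ℝ :=
  h (x + t * φ x) - h x

theorem shiftDiff_mul_add {φ h : ℝ → ℝ} {x : ℝ} (hx : φ x ≠ 0) (t w : ℝ) :
    shiftDiff φ h (φ (x + t * φ x) / φ x * w + t) x =
      shiftDiff φ h t x + shiftDiff φ h w (x + t * φ x) := by
  have hpt : x + (φ (x + t * φ x) / φ x * w + t) * φ x = x + t * φ x + w * φ (x + t * φ x) := by
    field_simp
    ring
  simp only [shiftDiff, hpt]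
  ring

theorem BaireFun.shiftDiff {h : ℝ → ℝ} (hB : BaireFun h) (φ : ℝ → ℝ) (x : ℝ) :
    BaireFun fun t => shiftDiff φ h t x :=
  (continuous_sub_right (h x)).comp_baireFun (hB.comp_add_mul x (φ x))

theorem exists_forall_shiftDiff_le {φ h : ℝ → ℝ} {ρ a₀ b : ℝ} (hρ : 0 ≤ ρ) (ha₀ : 0 ≤ a₀)
    (hφ : ∀ᶠ x in atTop, 0 < φ x)
    (hratio : TendstoUniformlyOn (fun x t => φ (x + t * φ x) / φ x) (fun t => 1 + ρ * t) atTop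
      (Icc 0 b))
    (hB : BaireFun h) (hup : ∀ t > a₀, IsBoundedUnder (· ≤ ·) atTop (shiftDiff φ h t))
    (hlo : ∀ t > a₀, IsBoundedUnder (· ≥ ·) atTop (shiftDiff φ h t)) :
    ∃ M X, ∀ x ≥ X, ∀ t ∈ Icc 0 b, shiftDiff φ h t x ≤ M := by
  by_contra! hunb
  choose x hx t ht hlt using fun n : ℕ => hunb n n
  obtain ⟨t₀, ht₀, σ, hσ, htσ⟩ := isCompact_Icc.tendsto_subseq ht
  have hσn (n : ℕ) : (n : ℝ) ≤ σ n := by exact_mod_cast hσ.le_apply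
  have hxσ : Tendsto (x ∘ σ) atTop atTop :=
    tendsto_atTop_mono (fun n => (hσn n).trans (hx (σ n))) tendsto_natCast_atTop_atTop
  have hgrow : Tendsto (fun n => shiftDiff φ h (t (σ n)) (x (σ n))) atTop atTop :=
    tendsto_atTop_mono (fun n => (hσn n).trans (hlt (σ n)).le) tendsto_natCast_atTop_atTop
  let z n := x (σ n) + t (σ n) * φ (x (σ n))
  have hzσ : Tendsto z atTop atTop := by
    refine tendsto_atTop_mono' _ ?_ hxσ
    filter_upwards [hxσ.eventually hφ] with n hn
    exact le_add_of_nonneg_right (mul_nonneg (ht (σ n)).1 hn.le)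
  have hr : Tendsto (fun n => φ (z n) / φ (x (σ n))) atTop (𝓝 (1 + ρ * t₀)) :=
    hratio.tendsto_comp_of_tendsto (by fun_prop) hxσ
      (tendsto_nhdsWithin_iff.2 ⟨htσ, .of_forall fun n => ht (σ n)⟩)
  obtain ⟨K, hK⟩ := exists_eventually_exists_le_comp_affine
    (g' := fun n w => -shiftDiff φ h w (z n))
    (fun n => hB.shiftDiff φ (x (σ n))) (fun n => continuous_neg.comp_baireFun (hB.shiftDiff φ _))
    isOpen_Ioi nonempty_Ioi (fun s hs => hxσ.isBoundedUnder_comp (hup s hs))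
    (fun w hw => isBoundedUnder_le_neg.2 (hzσ.isBoundedUnder_comp (hlo w hw))) hr htσ
    (by nlinarith [ht₀.1]) fun w (hw : a₀ < w) => show a₀ < (1 + ρ * t₀) * w + t₀ by
      nlinarith [ht₀.1, mul_nonneg (mul_nonneg hρ ht₀.1) (ha₀.trans hw.le)]
  obtain ⟨n, ⟨w, hw', hw⟩, hφn, hn⟩ :=
    (hK.and ((hxσ.eventually hφ).and (hgrow.eventually_gt_atTop (2 * K)))).exists
  simp only [z, Function.comp_apply] at hw hw' hφn
  rw [shiftDiff_mul_add hφn.ne'] at hw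
  linarith

theorem shiftDiff_le_of_mem_Icc_pow {φ h : ℝ → ℝ} {a B M q Q X : ℝ} (ha : 0 ≤ a) (hq : 1 ≤ q)
    (hB : a * (Q + 1) ≤ B) (hM₀ : 0 ≤ M) (hM : ∀ x ≥ X, ∀ t ∈ Icc a B, shiftDiff φ h t x ≤ M)
    (hφ : ∀ x ≥ X, 0 < φ x)
    (hstep : ∀ x ≥ X, q * φ x ≤ φ (x + a * φ x) ∧ φ (x + a * φ x) ≤ Q * φ x) (n : ℕ) :
    ∀ x ≥ X, ∀ u ∈ Icc a (B * q ^ n), shiftDiff φ h u x ≤ (n + 1) * M := by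
  induction n with
  | zero => simpa using hM
  | succ n ih =>
    intro x hx u hu
    obtain ⟨hqR, hRQ⟩ := hstep x hx
    have hφx := hφ x hx
    by_cases huB : u ≤ B
    · calc shiftDiff φ h u x ≤ M := hM x hx u ⟨hu.1, huB⟩
        _ ≤ (↑(n + 1) + 1) * M := le_mul_of_one_le_left hM₀ (by push_cast; linarith)
    set x' := x + a * φ x
    set R := φ x' / φ x
    have hqR' : q ≤ R := (le_div_iff₀ hφx).2 hqR
    have hRQ' : R ≤ Q := (div_le_iff₀ hφx).2 hRQ
    have hR : 0 < R := by linarith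
    have haB : a ≤ B := by nlinarith
    have hu' : (u - a) / R ∈ Icc a (B * q ^ n) := by
      have hqn : 0 ≤ B * q ^ n := mul_nonneg (by nlinarith) (by positivity)
      have hu₂ : u ≤ B * q ^ n * q := by simpa [pow_succ, mul_assoc] using hu.2
      constructor
      · rw [le_div_iff₀ hR]
        nlinarith
      · rw [div_le_iff₀ hR]
        nlinarith [mul_le_mul_of_nonneg_left hqR' hqn]
    have hsplit := shiftDiff_mul_add (h := h) hφx.ne' a ((u - a) / R)
    rw [show R * ((u - a) / R) + a = u by field_simp; ring] at hsplit
    have hx' : x' ≥ X := hx.trans (le_add_of_nonneg_right (mul_nonneg ha hφx.le))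
    rw [hsplit]
    push_cast
    linarith [hM x hx a ⟨le_rfl, haB⟩, ih x' hx' _ hu']

theorem exists_le_pow_and_natCast_le {q u : ℝ} (hq : 1 < q) (hu : 1 ≤ u) :
    ∃ n : ℕ, u ≤ q ^ n ∧ (n : ℝ) ≤ log u / log q + 1 := by
  have hlogq := log_pos hq
  refine ⟨⌈log u / log q⌉₊, ?_, (Nat.ceil_lt_add_one (div_nonneg (log_nonneg hu) hlogq.le)).le⟩
  rw [← log_le_log_iff (by linarith) (by positivity), log_pow]
  exact (div_le_iff₀ hlogq).1 (Nat.le_ceil _)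

theorem le_mul_log_of_forall_le_pow {f : ℝ → ℝ} {a B M q u : ℝ} (hq : 1 < q) (hB : 1 ≤ B)
    (hM : 0 ≤ M) (hf : ∀ n : ℕ, ∀ u ∈ Icc a (B * q ^ n), f u ≤ (n + 1) * M) (hau : a ≤ u)
    (hu : exp 1 ≤ u) : f u ≤ M * (1 / log q + 2) * log u := by
  have hlogu : 1 ≤ log u := (le_log_iff_exp_le ((exp_pos 1).trans_le hu)).2 hu
  obtain ⟨n, hun, hn⟩ := exists_le_pow_and_natCast_le hq ((one_le_exp zero_le_one).trans hu)
  calc f u ≤ (n + 1) * M := hf n u ⟨hau, hun.trans (le_mul_of_one_le_left (by positivity) hB)⟩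
    _ ≤ (log u / log q + 2) * M := by gcongr ?_ * M; linarith
    _ ≤ M * (1 / log q + 2) * log u := by
      rw [div_eq_mul_one_div (log u)]
      nlinarith [mul_le_mul_of_nonneg_left hlogu hM]

/-- Theorem 10 (global logarithmic bound): for `φ ∈ SE` with index `ρ > 0` and
`h` Baire, if `H^*(t) = limsup_{x→∞} Δ_t^φ h(x)` and
`H_*(t) = liminf_{x→∞} Δ_t^φ h(x)` are finite for all `t` in a half-line
`[a₀, ∞)` with `a₀ > 0`, then there are constants `C > 0`, `X` and `U > 1` with
`h(x + uφ(x)) − h(x) ≤ C log u` for all `x ≥ X` and `u ≥ U`. -/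
theorem global_log_bound (φ : ℝ → ℝ) (ρ : ℝ) (hρ : 0 < ρ)
    (hφ : IsSelfEquivarying φ ρ) (h : ℝ → ℝ) (hB : BaireFun h)
    (a₀ : ℝ) (ha₀ : 0 < a₀)
    (hfin : ∀ t ≥ a₀,
      (⊥ : EReal) <
        Filter.liminf (fun x => ((h (x + t * φ x) - h x : ℝ) : EReal)) atTop ∧
      Filter.limsup (fun x => ((h (x + t * φ x) - h x : ℝ) : EReal)) atTop < ⊤) :
    ∃ C > (0:ℝ), ∃ X U : ℝ, 1 < U ∧ ∀ x ≥ X, ∀ u ≥ U,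
      h (x + u * φ x) - h x ≤ C * Real.log u := by
  obtain ⟨hpos, -, hratio⟩ := hφ
  set q := 1 + ρ * a₀ / 2
  set Q := 2 + ρ * a₀
  set B := a₀ * (Q + 1) + 1
  have hq : 1 < q := by simp only [q]; nlinarith
  obtain ⟨M, X₁, hM⟩ := exists_forall_shiftDiff_le hρ.le ha₀.le hpos (hratio B (by positivity)) hB
    (fun t ht => isBoundedUnder_le_of_limsup_coe_lt_top (hfin t ht.le).2)
    (fun t ht => isBoundedUnder_ge_of_bot_lt_liminf_coe (hfin t ht.le).1)
  have hstep := eventually_mul_le_and_le_mul_of_tendsto_div hpos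
    ((hratio a₀ ha₀).tendsto_at ⟨ha₀.le, le_rfl⟩) (q := q) (Q := Q) (by simp only [q]; nlinarith)
    (by simp only [Q]; linarith)
  obtain ⟨X, hX⟩ := eventually_atTop.1 ((hstep.and hpos).and (eventually_ge_atTop X₁))
  have hchain := shiftDiff_le_of_mem_Icc_pow (M := max M 1) ha₀.le hq.le
    (by simp only [B]; linarith) (by positivity) (fun x hx t ht => (hM x (hX x hx).2 t
      ⟨ha₀.le.trans ht.1, ht.2⟩).trans (le_max_left M 1)) (fun x hx => (hX x hx).1.2)
    (fun x hx => (hX x hx).1.1)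
  have hlogq := log_pos hq
  refine ⟨max M 1 * (1 / log q + 2), by positivity, X, max a₀ (exp 1),
    lt_max_of_lt_right (one_lt_exp_iff.2 one_pos), fun x hx u hu => ?_⟩
  exact le_mul_log_of_forall_le_pow hq (le_add_of_nonneg_left (by positivity)) (by positivity)
    (fun n => hchain n x hx) (le_of_max_le_left hu) (le_of_max_le_right hu)
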